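/- Let λ ∈ {1,-1} and q, p ∈ ℂ, and let M(k) = 2ik²σ₃ - Q̃(k) for k ∈ ℂ. Then for every k ∈ ℂ, det M(k) - det M(-k) = 4iλk (conj(q)·p - q·conj(p)). Consequently, det M(k) = det M(-k) holds for all k ∈ ℂ if and only if q·conj(p) - conj(q)·p = 0. -/

import Mathlib

open Complex Matrix

/-- The Pauli matrix `σ₃ = diag(1,-1)`. -/
def sigma3 : Matrix (Fin 2) (Fin 2) ℂ := !![1, 0; 0, -1]

/-- The matrix `Q̃(k)` built from boundary values `q = q(0,t)`, `p = qₓ(0,t)`: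
`Q̃(k) = [[iλ|q|², 2kq + ip], [-2kλ·conj(q) + iλ·conj(p), -iλ|q|²]]`. -/
noncomputable def Qtilde (lam q p k : ℂ) : Matrix (Fin 2) (Fin 2) ℂ :=
  !![Complex.I * lam * (‖q‖ : ℂ) ^ 2, 2 * k * q + Complex.I * p;
     -2 * k * lam * (starRingEnd ℂ) q + Complex.I * lam * (starRingEnd ℂ) p,
     -(Complex.I * lam * (‖q‖ : ℂ) ^ 2)]

noncomputable def laxM (lam q p k : ℂ) : Matrix (Fin 2) (Fin 2) ℂ :=
  (2 * Complex.I * k ^ 2) • sigma3 - Qtilde lam q p k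

/-- The only term of `det M(k)` that is odd in `k` is the last one. -/
theorem det_laxM (lam q p k : ℂ) :
    (laxM lam q p k).det =
      (2 * k ^ 2 - lam * (‖q‖ : ℂ) ^ 2) ^ 2 + 4 * lam * k ^ 2 * q * (starRingEnd ℂ) q
        + lam * p * (starRingEnd ℂ) p
        + 2 * Complex.I * lam * k * ((starRingEnd ℂ) q * p - q * (starRingEnd ℂ) p) := by
  simp only [laxM, sigma3, Qtilde, det_fin_two_of, smul_of, of_sub_of, smul_cons, smul_empty,
    cons_sub_cons, empty_sub_empty, smul_eq_mul]
  linear_combination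
    (-(2 * k ^ 2 - lam * (‖q‖ : ℂ) ^ 2) ^ 2 - lam * p * (starRingEnd ℂ) p) * Complex.I_sq

theorem det_laxM_sub_det_laxM_neg (lam q p k : ℂ) :
    (laxM lam q p k).det - (laxM lam q p (-k)).det =
      4 * Complex.I * lam * k * ((starRingEnd ℂ) q * p - q * (starRingEnd ℂ) p) := by
  rw [det_laxM, det_laxM]
  ring

theorem forall_eq_comp_neg_iff_of_sub_eq_mul {R : Type*} [Ring R] {f : R → R} {c : R}
    (hf : ∀ x, f x - f (-x) = c * x) : (∀ x, f x = f (-x)) ↔ c = 0 := by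
  constructor
  · intro heven
    simpa [heven 1] using (hf 1).symm
  · intro hc x
    rw [← sub_eq_zero, hf x, hc, zero_mul]

/-- For `λ ∈ {1,-1}` and `M(k) = 2ik²σ₃ - Q̃(k)`, one has
`det M(k) - det M(-k) = 4iλk (conj(q)·p - q·conj(p))`; consequently `det M(k)` is even in `k`
iff `q·conj(p) - conj(q)·p = 0`. -/
theorem detM_even_iff (lam : ℂ) (hlam : lam = 1 ∨ lam = -1) (q p : ℂ) :
    (∀ k : ℂ,
      ((2 * Complex.I * k ^ 2) • sigma3 - Qtilde lam q p k).det
        - ((2 * Complex.I * (-k) ^ 2) • sigma3 - Qtilde lam q p (-k)).det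
      = 4 * Complex.I * lam * k * ((starRingEnd ℂ) q * p - q * (starRingEnd ℂ) p)) ∧
    ((∀ k : ℂ,
      ((2 * Complex.I * k ^ 2) • sigma3 - Qtilde lam q p k).det
        = ((2 * Complex.I * (-k) ^ 2) • sigma3 - Qtilde lam q p (-k)).det)
      ↔ q * (starRingEnd ℂ) p - (starRingEnd ℂ) q * p = 0) := by
  have hdiff := det_laxM_sub_det_laxM_neg lam q p
  have hodd : ∀ k, (laxM lam q p k).det - (laxM lam q p (-k)).det =
      (4 * Complex.I * lam * ((starRingEnd ℂ) q * p - q * (starRingEnd ℂ) p)) * k :=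
    fun k ↦ (hdiff k).trans (by ring)
  refine ⟨hdiff, (forall_eq_comp_neg_iff_of_sub_eq_mul hodd).trans ?_⟩
  have hlam0 : lam ≠ 0 := by rcases hlam with rfl | rfl <;> norm_num
  simp only [mul_eq_zero, Complex.I_ne_zero, hlam0, OfNat.ofNat_ne_zero, false_or, sub_eq_zero]
  exact eq_comm
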